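/- arXiv:1801.09654 — 4 statements merged into one kernel-verified Lean document; each statement's English description precedes it below -/
import Mathlib

section
/- Let Y have perfect state transfer between a and b at time π/2 and let T be an order-two automorphism of Y swapping a and b. Define A(X_θ) = I⊗A(Y) + cos(2θ)(σ_X⊗I) + sin(2θ)(σ_Z⊗T). Then exp(-i(π/2)A(X_θ)) e_{(0,a)} = −i sin(2θ) e_{(0,a)} − i cos(2θ) e_{(1,b)}. -/
open Matrix Complex BigOperators

/-- Continuous-time quantum walk `U(t) = exp(-itA)` of a real (weighted) adjacency matrix. -/
noncomputable def qwalk {V : Type*} [Fintype V] [DecidableEq V]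
    (A : Matrix V V ℝ) (t : ℝ) : Matrix V V ℂ :=
  NormedSpace.exp ((-(Complex.I * (t : ℂ))) • A.map (fun x => (x : ℂ)))

/-- Characteristic (standard basis) vector of a vertex, over `ℂ`. -/
noncomputable def eC {V : Type*} [DecidableEq V] (a : V) : V → ℂ := Pi.single a 1

/-- Characteristic (standard basis) vector of a vertex, over `ℝ`. -/
noncomputable def eR {V : Type*} [DecidableEq V] (a : V) : V → ℝ := Pi.single a 1
open Kronecker

/-!
The Pauli terms `σ_X ⊗ I` and `σ_Z ⊗ T` square to the identity and anticommute, so their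
rotation `P = cos(2θ) σ_X ⊗ I + sin(2θ) σ_Z ⊗ T` is an involution and
`exp(-itP) = cos t - i sin t P`. Since `T` commutes with `A(Y)`, `P` commutes with `I ⊗ A(Y)`
and the walk on `X_θ` factors as `(I ⊗ U_Y(t)) exp(-itP)`, which at `t = π/2` is
`-i (I ⊗ U_Y(π/2)) P`. Now `P` sends `e_(0,a)` to `cos(2θ) e_(1,a) + sin(2θ) e_(0,b)`, and
`U_Y(π/2)` sends `e_a` to `e_b` and, because it commutes with the involution `T` swapping them,
`e_b` back to `e_a`.
-/

theorem exp_smul_eq_cosh_add_sinh_of_mul_self_eq_one {𝔸 : Type*} [Ring 𝔸] [Algebra ℂ 𝔸]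
    [TopologicalSpace 𝔸] [IsTopologicalRing 𝔸] [T2Space 𝔸] [ContinuousSMul ℂ 𝔸]
    {P : 𝔸} (hP : P * P = 1) (z : ℂ) :
    NormedSpace.exp (z • P) = Complex.cosh z • 1 + Complex.sinh z • P := by
  have hP2 (k : ℕ) : P ^ (2 * k) = 1 := by rw [pow_mul, sq, hP, one_pow]
  rw [NormedSpace.exp_eq_tsum ℂ]
  refine HasSum.tsum_eq (HasSum.even_add_odd ?_ ?_)
  · convert (Complex.hasSum_cosh z).smul_const (1 : 𝔸) using 2 with k
    rw [smul_pow, hP2, smul_smul, div_eq_inv_mul]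
  · convert (Complex.hasSum_sinh z).smul_const P using 2 with k
    rw [smul_pow, smul_smul, pow_succ P, hP2, one_mul, div_eq_inv_mul]

theorem smul_add_smul_mul_self_eq_one {R 𝔸 : Type*} [CommRing R] [Ring 𝔸] [Algebra R 𝔸]
    {x y : 𝔸} (hx : x * x = 1) (hy : y * y = 1) (hxy : x * y + y * x = 0) {c s : R}
    (hcs : c ^ 2 + s ^ 2 = 1) :
    (c • x + s • y) * (c • x + s • y) = 1 :=
  calc _ = (c * c) • (x * x) + (c * s) • (x * y + y * x) + (s * s) • (y * y) := by
        simp only [add_mul, mul_add, smul_mul_smul_comm, smul_add]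
        module
    _ = 1 := by rw [hx, hy, hxy, smul_zero, add_zero, ← add_smul, ← sq, ← sq, hcs, one_smul]

theorem Commute.kronecker {R l m : Type*} [CommSemiring R] [Fintype l] [Fintype m]
    {A C : Matrix l l R} {B D : Matrix m m R} (hAC : Commute A C) (hBD : Commute B D) :
    Commute (A ⊗ₖ B) (C ⊗ₖ D) := by
  rw [commute_iff_eq, ← mul_kronecker_mul, ← mul_kronecker_mul, hAC.eq, hBD.eq]

namespace Matrix

variable {R : Type*} [CommSemiring R] {l m : Type*} [Fintype l] [Fintype m]
  [DecidableEq l] [DecidableEq m]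

theorem kronecker_mulVec_single_one {M : Matrix l l R} {N : Matrix m m R} {i i' : l} {j j' : m}
    (hM : M *ᵥ Pi.single i 1 = Pi.single i' 1) (hN : N *ᵥ Pi.single j 1 = Pi.single j' 1) :
    (M ⊗ₖ N) *ᵥ Pi.single (i, j) 1 = Pi.single (i', j') 1 := by
  funext ⟨p, q⟩
  have hp := congrFun hM p
  have hq := congrFun hN q
  simp only [mulVec_single_one, col_apply] at hp hq ⊢
  rw [kroneckerMap_apply, hp, hq]
  by_cases hpi : p = i' <;> by_cases hqj : q = j' <;> simp [hpi, hqj]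

theorem mulVec_eq_of_commute_of_mul_self_eq_one {S U : Matrix m m R} {v w : m → R}
    (hSU : Commute S U) (hS : S * S = 1) (hSv : S *ᵥ v = w) (hUv : U *ᵥ v = w) :
    U *ᵥ w = v := by
  rw [← hSv, mulVec_mulVec, ← hSU.eq, ← mulVec_mulVec, hUv, ← hSv, mulVec_mulVec, hS,
    one_mulVec]

variable (l) in
def oneKroneckerRingHom : Matrix m m R →+* Matrix (l × m) (l × m) R where
  toFun X := 1 ⊗ₖ X
  map_one' := one_kronecker_one
  map_mul' X Y := by rw [← mul_kronecker_mul, one_mul]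
  map_zero' := kronecker_zero _
  map_add' := kronecker_add _

end Matrix

section Pauli

variable {R : Type*} [CommRing R] {m : Type*} [DecidableEq m]

def pauliRotation (c s : R) (T : Matrix m m R) : Matrix (Fin 2 × m) (Fin 2 × m) R :=
  c • (!![0, 1; 1, 0] ⊗ₖ 1) + s • (!![1, 0; 0, -1] ⊗ₖ T)

theorem pauliRotation_mul_self [Fintype m] {T : Matrix m m R} (hT : T * T = 1) {c s : R}
    (hcs : c ^ 2 + s ^ 2 = 1) : pauliRotation c s T * pauliRotation c s T = 1 := by
  have hXX : (!![0, 1; 1, 0] : Matrix (Fin 2) (Fin 2) R) * !![0, 1; 1, 0] = 1 := by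
    simp [one_fin_two]
  have hZZ : (!![1, 0; 0, -1] : Matrix (Fin 2) (Fin 2) R) * !![1, 0; 0, -1] = 1 := by
    simp [one_fin_two]
  have hXZ : (!![0, 1; 1, 0] : Matrix (Fin 2) (Fin 2) R) * !![1, 0; 0, -1] +
      !![1, 0; 0, -1] * !![0, 1; 1, 0] = 0 := by
    simp [← Matrix.ext_iff, Fin.forall_fin_two]
  refine smul_add_smul_mul_self_eq_one ?_ ?_ ?_ hcs
  · rw [← mul_kronecker_mul, hXX, one_mul, one_kronecker_one]
  · rw [← mul_kronecker_mul, hZZ, hT, one_kronecker_one]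
  · rw [← mul_kronecker_mul, ← mul_kronecker_mul, one_mul, mul_one, ← add_kronecker, hXZ,
      zero_kronecker]

theorem commute_one_kronecker_pauliRotation [Fintype m] {A T : Matrix m m R}
    (hTA : Commute T A) (c s : R) :
    Commute ((1 : Matrix (Fin 2) (Fin 2) R) ⊗ₖ A) (pauliRotation c s T) :=
  (((Commute.one_left _).kronecker (Commute.one_right _)).smul_right _).add_right
    (((Commute.one_left _).kronecker hTA.symm).smul_right _)

theorem pauliRotation_mulVec_single [Fintype m] {T : Matrix m m R} {a b : m}
    (hT : T *ᵥ Pi.single a 1 = Pi.single b 1) (c s : R) :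
    pauliRotation c s T *ᵥ Pi.single (0, a) 1 =
      c • Pi.single (1, a) 1 + s • Pi.single (0, b) 1 := by
  have hX :
      (!![0, 1; 1, 0] ⊗ₖ (1 : Matrix m m R)) *ᵥ Pi.single (0, a) 1 = Pi.single (1, a) 1 :=
    kronecker_mulVec_single_one (by ext i; fin_cases i <;> simp) (one_mulVec _)
  have hZ : (!![1, 0; 0, -1] ⊗ₖ T) *ᵥ Pi.single (0, a) 1 = Pi.single (0, b) 1 :=
    kronecker_mulVec_single_one (by ext i; fin_cases i <;> simp) hT
  rw [pauliRotation, add_mulVec, smul_mulVec, smul_mulVec, hX, hZ]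

theorem map_ofReal_pauliRotation (c s : ℝ) (T : Matrix m m ℝ) :
    (pauliRotation c s T).map ofReal = pauliRotation (c : ℂ) (s : ℂ) (T.map ofReal) := by
  ext ⟨i, k⟩ ⟨j, l⟩
  fin_cases i <;> fin_cases j <;> by_cases hkl : k = l <;> simp [pauliRotation, one_apply, hkl]

end Pauli

theorem map_ofReal_mulVec_eC {V W : Type*} [Fintype W] [DecidableEq V] [DecidableEq W]
    {M : Matrix V W ℝ} {a : W} {b : V} (h : M *ᵥ eR a = eR b) :
    M.map ofReal *ᵥ eC a = eC b := by
  funext i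
  have hi := congrFun h i
  simp only [eR, eC, mulVec_single_one, col_apply, map_apply] at hi ⊢
  rw [hi]
  by_cases hib : i = b <;> simp [hib]

section QuantumWalk

variable {V W : Type*} [Fintype V] [DecidableEq V] [Fintype W] [DecidableEq W]

theorem qwalk_eq_exp_mapMatrix (A : Matrix V V ℝ) (t : ℝ) :
    qwalk A t = NormedSpace.exp ((-(I * t)) • Complex.ofRealHom.mapMatrix A) := rfl

theorem qwalk_add_of_commute {A B : Matrix V V ℝ} (h : Commute A B) (t : ℝ) :
    qwalk (A + B) t = qwalk A t * qwalk B t := by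
  simp only [qwalk_eq_exp_mapMatrix, map_add, smul_add]
  exact Matrix.exp_add_of_commute _ _ (((h.map _).smul_left _).smul_right _)

theorem qwalk_of_mul_self_eq_one {P : Matrix V V ℝ} (hP : P * P = 1) (t : ℝ) :
    qwalk P t = (Real.cos t : ℂ) • 1 - (I * Real.sin t) • P.map ofReal := by
  have hPc : Complex.ofRealHom.mapMatrix P * Complex.ofRealHom.mapMatrix P = 1 := by
    rw [← map_mul, hP, map_one]
  rw [qwalk_eq_exp_mapMatrix, exp_smul_eq_cosh_add_sinh_of_mul_self_eq_one hPc,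
    mul_comm, Complex.cosh_neg, Complex.sinh_neg, Complex.cosh_mul_I,
    Complex.sinh_mul_I, ← ofReal_cos, ← ofReal_sin, neg_smul, ← sub_eq_add_neg, mul_comm]
  rfl

theorem commute_map_ofReal_qwalk {T A : Matrix V V ℝ} (h : Commute T A) (t : ℝ) :
    Commute (T.map ofReal) (qwalk A t) :=
  ((h.map Complex.ofRealHom.mapMatrix).smul_right _).exp_right

theorem qwalk_one_kronecker (A : Matrix V V ℝ) (t : ℝ) :
    qwalk ((1 : Matrix W W ℝ) ⊗ₖ A) t = (1 : Matrix W W ℂ) ⊗ₖ qwalk A t := by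
  have hcont : Continuous (Matrix.oneKroneckerRingHom (R := ℂ) (m := V) W) :=
    continuous_pi fun p => continuous_pi fun q =>
      continuous_const.mul (continuous_id.matrix_elem p.2 q.2)
  have hmap : (-(I * t)) • Complex.ofRealHom.mapMatrix ((1 : Matrix W W ℝ) ⊗ₖ A) =
      Matrix.oneKroneckerRingHom W ((-(I * t)) • Complex.ofRealHom.mapMatrix A) := by
    ext ⟨i, k⟩ ⟨j, l⟩
    by_cases hij : i = j <;> simp [Matrix.oneKroneckerRingHom, hij]
  rw [qwalk_eq_exp_mapMatrix, qwalk_eq_exp_mapMatrix, hmap]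
  open scoped Norms.Operator in exact (NormedSpace.map_exp _ hcont _).symm

end QuantumWalk

theorem stmt11_general {n : ℕ} (A T : Matrix (Fin n) (Fin n) ℝ)
    (hT2 : T * T = 1) (hTA : T * A = A * T)
    (a b : Fin n) (hTab : T *ᵥ eR a = eR b)
    (hpst : (qwalk A (Real.pi / 2)) *ᵥ eC a = eC b)
    (θ : ℝ) :
    (qwalk ((1 : Matrix (Fin 2) (Fin 2) ℝ) ⊗ₖ A +
        Real.cos (2 * θ) • (!![0, 1; 1, 0] ⊗ₖ (1 : Matrix (Fin n) (Fin n) ℝ)) +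
        Real.sin (2 * θ) • (!![1, 0; 0, -1] ⊗ₖ T)) (Real.pi / 2)) *ᵥ
      eC ((0 : Fin 2), a) =
    (-(Complex.I) * Real.sin (2 * θ)) • eC ((0 : Fin 2), a) +
    (-(Complex.I) * Real.cos (2 * θ)) • eC ((1 : Fin 2), b) := by
  set c := Real.cos (2 * θ)
  set s := Real.sin (2 * θ)
  set U := qwalk A (Real.pi / 2)
  have hTabC : T.map ofReal *ᵥ eC a = eC b := map_ofReal_mulVec_eC hTab
  have hUb : U *ᵥ eC b = eC a := by
    refine mulVec_eq_of_commute_of_mul_self_eq_one (commute_map_ofReal_qwalk hTA _) ?_ hTabC hpst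
    change Complex.ofRealHom.mapMatrix T * Complex.ofRealHom.mapMatrix T = 1
    rw [← map_mul, hT2, map_one]
  have hPa : (pauliRotation c s T).map ofReal *ᵥ eC (0, a) =
      (c : ℂ) • eC (1, a) + (s : ℂ) • eC (0, b) := by
    rw [map_ofReal_pauliRotation]
    exact pauliRotation_mulVec_single hTabC _ _
  have hU1a : ((1 : Matrix (Fin 2) (Fin 2) ℂ) ⊗ₖ U) *ᵥ eC (1, a) = eC (1, b) :=
    kronecker_mulVec_single_one (one_mulVec _) hpst
  have hU0b : ((1 : Matrix (Fin 2) (Fin 2) ℂ) ⊗ₖ U) *ᵥ eC (0, b) = eC (0, a) :=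
    kronecker_mulVec_single_one (one_mulVec _) hUb
  rw [add_assoc, ← pauliRotation,
    qwalk_add_of_commute (commute_one_kronecker_pauliRotation hTA _ _), qwalk_one_kronecker,
    qwalk_of_mul_self_eq_one (pauliRotation_mul_self hT2 (Real.cos_sq_add_sin_sq _)),
    Real.cos_pi_div_two, Real.sin_pi_div_two, ← mulVec_mulVec, sub_mulVec, smul_mulVec,
    smul_mulVec, hPa, ofReal_zero, ofReal_one, mul_one, zero_smul, zero_sub, mulVec_neg,
    mulVec_smul, mulVec_add, mulVec_smul, mulVec_smul, hU1a, hU0b]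
  module

/-- Isospectral deformation: if Y has perfect state transfer between a and b at time π/2
and T is an order-two automorphism of Y swapping a and b, then
X_θ = I⊗Y + cos(2θ)(σ_X⊗I) + sin(2θ)(σ_Z⊗T) has
(−i sin 2θ, −i cos 2θ)-revival between (0,a) and (1,b) at time π/2. -/
theorem stmt11 {n : ℕ} (A T : Matrix (Fin n) (Fin n) ℝ) (hA : A.IsSymm)
    (hTperm : ∃ σ : Equiv.Perm (Fin n), T = σ.permMatrix ℝ)
    (hT2 : T * T = 1) (hTA : T * A = A * T)
    (a b : Fin n) (hab : a ≠ b) (hTab : T *ᵥ eR a = eR b)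
    (hpst : (qwalk A (Real.pi / 2)) *ᵥ eC a = eC b)
    (θ : ℝ) :
    (qwalk ((1 : Matrix (Fin 2) (Fin 2) ℝ) ⊗ₖ A +
        Real.cos (2 * θ) • (!![0, 1; 1, 0] ⊗ₖ (1 : Matrix (Fin n) (Fin n) ℝ)) +
        Real.sin (2 * θ) • (!![1, 0; 0, -1] ⊗ₖ T)) (Real.pi / 2)) *ᵥ
      eC ((0 : Fin 2), a) =
    (-(Complex.I) * Real.sin (2 * θ)) • eC ((0 : Fin 2), a) +
    (-(Complex.I) * Real.cos (2 * θ)) • eC ((1 : Fin 2), b) :=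
  stmt11_general A T hT2 hTA a b hTab hpst θ
end

section
/- Suppose (α,β)-revival occurs at time τ between vertices a and b lying in the same part of the bipartition of a connected bipartite graph X. Then X is periodic at both a and b at time 2τ: U(2τ)e_a = ±e_a and U(2τ)e_b = ±e_b. -/
open Matrix Complex BigOperators

/-! Since `A` is real symmetric, `U = U(τ)` is symmetric and unitary, so `conj U * U = 1`.
Conjugating by the `±1` signature of the bipartition turns `A` into `-A`, so `U(-t)` and `U(t)`
agree on entries within one part; as `conj U(t) = U(-t)`, these entries are real. Hence
`v = U e_a = α e_a + β e_b` is a real vector, and conjugating `conj U v = e_a` gives `U v = e_a`,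
i.e. `U(2τ) e_a = e_a`. Finally `β U(2τ) e_b = U(2τ) v - α e_a = U e_a - α e_a = β e_b`. -/

theorem Matrix.mulVec_mulVec_eq_self_of_isSymm {V : Type*} [Fintype V] [DecidableEq V]
    {U : Matrix V V ℂ} (hsymm : U.IsSymm) (hunit : Uᴴ * U = 1) {x : V → ℂ} (hx : star x = x)
    (hUx : star (U *ᵥ x) = U *ᵥ x) : U *ᵥ (U *ᵥ x) = x := by
  have h : Uᴴ *ᵥ (U *ᵥ x) = x := by rw [mulVec_mulVec, hunit, one_mulVec]
  have h' := congrArg star h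
  rwa [star_mulVec, conjTranspose_conjTranspose, hUx, hx, ← mulVec_transpose, hsymm.eq] at h'

section QuantumWalk

variable {V : Type*} [Fintype V] [DecidableEq V] {A : Matrix V V ℝ}

theorem qwalk_add (A : Matrix V V ℝ) (s t : ℝ) : qwalk A (s + t) = qwalk A s * qwalk A t := by
  rw [qwalk, qwalk, qwalk, ← exp_add_of_commute _ _ (((Commute.refl _).smul_left _).smul_right _),
    ← add_smul]
  push_cast
  rw [mul_add, neg_add]

theorem qwalk_zero (A : Matrix V V ℝ) : qwalk A 0 = 1 := by
  simp [qwalk]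

theorem qwalk_isSymm (hA : A.IsSymm) (t : ℝ) : (qwalk A t).IsSymm :=
  ((hA.map _).smul _).exp

theorem qwalk_conjTranspose (hA : A.IsSymm) (t : ℝ) : (qwalk A t)ᴴ = qwalk A (-t) := by
  have hB : (A.map ((↑) : ℝ → ℂ))ᴴ = A.map (↑) := by
    ext i j
    simp [hA.apply i j]
  rw [qwalk, qwalk, ← exp_conjTranspose, conjTranspose_smul, hB]
  congr 1
  simp

theorem qwalk_conjTranspose_mul_self (hA : A.IsSymm) (t : ℝ) : (qwalk A t)ᴴ * qwalk A t = 1 := by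
  rw [qwalk_conjTranspose hA, ← qwalk_add, neg_add_cancel, qwalk_zero]

theorem star_qwalk_apply (hA : A.IsSymm) (t : ℝ) (i j : V) :
    star (qwalk A t i j) = qwalk A (-t) i j := by
  rw [← conjTranspose_apply, qwalk_conjTranspose hA, (qwalk_isSymm hA _).apply]

end QuantumWalk

section Bipartite

variable {V : Type*} [Fintype V] [DecidableEq V] {A : Matrix V V ℝ} {part : V → Bool}

def signDiagonal (part : V → Bool) : Matrix V V ℂ :=
  diagonal fun i => if part i then -1 else 1

theorem qwalk_neg_eq_signDiagonal_conj (hbip : ∀ i j, part i = part j → A i j = 0) (t : ℝ) :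
    qwalk A (-t) = signDiagonal part * qwalk A t * signDiagonal part := by
  set D := signDiagonal part
  have hDD : D * D = 1 := by
    rw [← diagonal_one]
    simp only [D, signDiagonal, diagonal_mul_diagonal]
    congr 1
    funext i
    split <;> norm_num
  have hDAD : D * A.map ((↑) : ℝ → ℂ) * D = -A.map (↑) := by
    ext i j
    simp only [D, signDiagonal, diagonal_mul, mul_diagonal, map_apply]
    by_cases h : part i = part j
    · simp [hbip i j h]
    · cases hi : part i <;> cases hj : part j <;> simp_all
  have hD : D⁻¹ = D := inv_eq_left_inv hDD
  have hconj := Matrix.exp_conj D ((-(I * t)) • A.map (↑)) (.of_mul_eq_one D hDD)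
  rw [hD, mul_smul_comm, smul_mul_assoc, hDAD] at hconj
  rw [qwalk, qwalk, ← hconj]
  simp

theorem qwalk_neg_apply_of_part_eq (hbip : ∀ i j, part i = part j → A i j = 0) (t : ℝ)
    {i j : V} (hij : part i = part j) : qwalk A (-t) i j = qwalk A t i j := by
  rw [qwalk_neg_eq_signDiagonal_conj hbip, signDiagonal, mul_diagonal, diagonal_mul, hij]
  split <;> ring

theorem star_qwalk_apply_of_part_eq (hA : A.IsSymm) (hbip : ∀ i j, part i = part j → A i j = 0)
    (t : ℝ) {i j : V} (hij : part i = part j) : star (qwalk A t i j) = qwalk A t i j := by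
  rw [star_qwalk_apply hA, qwalk_neg_apply_of_part_eq hbip t hij]

end Bipartite

theorem stmt14_general {n : ℕ} (G : SimpleGraph (Fin n)) [DecidableRel G.Adj]
    (part : Fin n → Bool) (hbip : ∀ i j, G.Adj i j → part i ≠ part j)
    (a b : Fin n) (hpart : part a = part b)
    (τ : ℝ) (α β : ℂ) (hβ : β ≠ 0)
    (hrev : (qwalk (G.adjMatrix ℝ) τ) *ᵥ eC a = α • eC a + β • eC b) :
    ((qwalk (G.adjMatrix ℝ) (2 * τ)) *ᵥ eC a = eC a ∧
     (qwalk (G.adjMatrix ℝ) (2 * τ)) *ᵥ eC b = eC b) ∨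
    ((qwalk (G.adjMatrix ℝ) (2 * τ)) *ᵥ eC a = -(eC a) ∧
     (qwalk (G.adjMatrix ℝ) (2 * τ)) *ᵥ eC b = -(eC b)) := by
  set A := G.adjMatrix ℝ
  set U := qwalk A τ
  have hA : A.IsSymm := G.isSymm_adjMatrix
  have hAbip : ∀ i j, part i = part j → A i j = 0 := fun i j hij => by
    simpa [A] using fun hadj => hbip i j hadj hij
  have hreal : star (U *ᵥ eC a) = U *ᵥ eC a := by
    funext i
    by_cases hi : part i = part a
    · rw [Pi.star_apply, eC, mulVec_single_one, col_apply,
        star_qwalk_apply_of_part_eq hA hAbip τ hi]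
    · have hia : i ≠ a := fun h => hi (h ▸ rfl)
      have hib : i ≠ b := fun h => hi (h ▸ hpart.symm)
      rw [hrev]
      simp [eC, hia, hib]
  have hUUa : (U * U) *ᵥ eC a = eC a := by
    rw [← mulVec_mulVec]
    exact mulVec_mulVec_eq_self_of_isSymm (qwalk_isSymm hA τ)
      (qwalk_conjTranspose_mul_self hA τ) (by simp [eC]) hreal
  have hUUb : (U * U) *ᵥ eC b = eC b := by
    have h : (U * U) *ᵥ (U *ᵥ eC a) = U *ᵥ eC a := by
      rw [mulVec_mulVec, mul_assoc, ← mulVec_mulVec, hUUa]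
    rw [hrev, mulVec_add, mulVec_smul, mulVec_smul, hUUa, add_right_inj] at h
    exact smul_right_injective _ hβ h
  rw [two_mul, qwalk_add]
  exact Or.inl ⟨hUUa, hUUb⟩

/-- Fractional revival between two vertices in the same part of the bipartition of a
connected bipartite graph implies periodicity at both vertices at time 2τ, with
U(2τ)e_a = ±e_a and U(2τ)e_b = ±e_b (same sign). -/
theorem stmt14 {n : ℕ} (G : SimpleGraph (Fin n)) [DecidableRel G.Adj]
    (hconn : G.Connected)
    (part : Fin n → Bool) (hbip : ∀ i j, G.Adj i j → part i ≠ part j)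
    (a b : Fin n) (hab : a ≠ b) (hpart : part a = part b)
    (τ : ℝ) (α β : ℂ) (hβ : β ≠ 0)
    (hnorm : ‖α‖ ^ 2 + ‖β‖ ^ 2 = 1)
    (hrev : (qwalk (G.adjMatrix ℝ) τ) *ᵥ eC a = α • eC a + β • eC b) :
    ((qwalk (G.adjMatrix ℝ) (2 * τ)) *ᵥ eC a = eC a ∧
     (qwalk (G.adjMatrix ℝ) (2 * τ)) *ᵥ eC b = eC b) ∨
    ((qwalk (G.adjMatrix ℝ) (2 * τ)) *ᵥ eC a = -(eC a) ∧
     (qwalk (G.adjMatrix ℝ) (2 * τ)) *ᵥ eC b = -(eC b)) :=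
  stmt14_general G part hbip a b hpart τ α β hβ hrev
end

section
/- Suppose (α,β)-revival occurs at time τ between vertices a and b in different parts of the bipartition of a connected bipartite graph. Then α is real, β is purely imaginary, and a and b are strongly cospectral. -/
open Matrix Complex BigOperators

/-!
Let `U = qwalk A τ` with `A` the adjacency matrix and `D` the diagonal `±1` matrix of the
bipartition. Since `D A D = -A`, we get `D U D = U(-τ) = Uᴴ`; as `U` is also symmetric, its
entries within a part are real and across parts purely imaginary, so `α = U a a` is real and
`β = U b a` is imaginary. Then `Uᴴ e_a = α e_a - β e_b`, and `U Uᴴ = 1` together with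
`α² - β² = |α|² + |β|² = 1` forces `U e_b = β e_a + α e_b`.

Each spectral idempotent satisfies `E_r U = λ E_r` with `λ = exp(-iτθ_r)`, so `u = E_r e_a`,
`v = E_r e_b` satisfy `λu = αu + βv` and `λv = βu + αv`. Hence `(λ - α + β)(u - v) = 0` and
`(λ - α - β)(u + v) = 0`, and since `β ≠ 0` the two scalars cannot both vanish.
-/

theorem mul_exp_of_mul_eq_smul {𝔸 : Type*} [NormedRing 𝔸] [NormedAlgebra ℂ 𝔸] [CompleteSpace 𝔸]
    {P M : 𝔸} {c : ℂ} (h : P * M = c • P) :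
    P * NormedSpace.exp M = Complex.exp c • P := by
  have hpow (k : ℕ) : P * M ^ k = c ^ k • P := by
    induction k with
    | zero => simp
    | succ k ih => rw [pow_succ, ← mul_assoc, ih, smul_mul_assoc, h, smul_smul, ← pow_succ]
  have hP : HasSum (fun k : ℕ => ((k.factorial : ℂ)⁻¹ * c ^ k) • P) (P * NormedSpace.exp M) := by
    simpa only [mul_smul_comm, hpow, smul_smul] using
      (NormedSpace.exp_series_hasSum_exp' (𝕂 := ℂ) M).mul_left P
  have hc : HasSum (fun k : ℕ => ((k.factorial : ℂ)⁻¹ * c ^ k) • P) (NormedSpace.exp c • P) :=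
    (NormedSpace.exp_series_hasSum_exp' (𝕂 := ℂ) c).smul_const P
  rw [Complex.exp_eq_exp_ℂ]
  exact hP.unique hc

theorem eq_or_eq_neg_of_smul_eq {K W : Type*} [Field K] [CharZero K] [AddCommGroup W]
    [Module K W] {u v : W} {lam α β : K} (hβ : β ≠ 0)
    (hu : lam • u = α • u + β • v) (hv : lam • v = β • u + α • v) : u = v ∨ u = -v := by
  have hsub : (lam - α + β) • (u - v) = 0 := by
    simp only [add_smul, sub_smul, smul_sub, hu, hv]; module
  have hadd : (lam - α - β) • (u + v) = 0 := by
    simp only [sub_smul, smul_add, hu, hv]; module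
  by_contra! hne
  rw [smul_eq_zero, or_iff_left (sub_ne_zero.mpr hne.1)] at hsub
  rw [smul_eq_zero, or_iff_left fun h ↦ hne.2 (eq_neg_of_add_eq_zero_left h)] at hadd
  exact hβ (by linear_combination (hsub - hadd) / 2)

theorem mulVec_swap_of_mul_eq_one {K V : Type*} [Field K] [Fintype V] [DecidableEq V]
    {U W : Matrix V V K} {u v : V → K} {α β : K} (hβ : β ≠ 0) (hαβ : α ^ 2 - β ^ 2 = 1)
    (hUW : U * W = 1) (hU : U *ᵥ u = α • u + β • v) (hW : W *ᵥ u = α • u - β • v) :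
    U *ᵥ v = β • u + α • v := by
  -- `u = U (W u) = α U u - β U v`, solved for `U v`
  have hu : u = α • (α • u + β • v) - β • (U *ᵥ v) := by
    rw [← hU, ← Matrix.mulVec_smul, ← Matrix.mulVec_smul, ← Matrix.mulVec_sub, ← hW,
      Matrix.mulVec_mulVec, hUW, Matrix.one_mulVec]
  apply smul_right_injective _ hβ
  calc β • (U *ᵥ v) = (α ^ 2 - 1) • u + (α * β) • v := by
        linear_combination (norm := module) hu
    _ = β • (β • u + α • v) := by linear_combination (norm := module) hαβ • u

def partSign {V : Type*} (part : V → Bool) (x : V) : ℂ := if part x then 1 else -1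

theorem partSign_mul_partSign {V : Type*} (part : V → Bool) (x y : V) :
    partSign part x * partSign part y = if part x = part y then 1 else -1 := by
  unfold partSign; cases part x <;> cases part y <;> simp

section QuantumWalk

variable {V : Type*} [Fintype V] [DecidableEq V] {A : Matrix V V ℝ}

theorem qwalk_transpose (hA : A.IsSymm) (t : ℝ) : (qwalk A t)ᵀ = qwalk A t := by
  rw [qwalk, ← Matrix.exp_transpose, transpose_smul, ← transpose_map, hA.eq]

theorem qwalk_mul_qwalk_neg (t : ℝ) : qwalk A t * qwalk A (-t) = 1 := by
  rw [qwalk, qwalk, ← Matrix.exp_add_of_commute]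
  · simp
  · exact (Commute.refl _).smul_left _ |>.smul_right _

theorem qwalk_mul_conjTranspose (hA : A.IsSymm) (t : ℝ) : qwalk A t * (qwalk A t)ᴴ = 1 := by
  rw [qwalk_conjTranspose hA, qwalk_mul_qwalk_neg]

theorem diagonal_partSign_mul_self (part : V → Bool) :
    diagonal (partSign part) * diagonal (partSign part) = 1 := by
  simp [diagonal_mul_diagonal, partSign_mul_partSign]

variable {part : V → Bool}

theorem diagonal_partSign_conj (hbip : ∀ x y, part x = part y → A x y = 0) :
    diagonal (partSign part) * A.map (↑) * diagonal (partSign part) = -A.map (↑) := by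
  ext x y
  rw [mul_diagonal, diagonal_mul, mul_right_comm, partSign_mul_partSign]
  by_cases h : part x = part y <;> simp [h, hbip]

theorem diagonal_partSign_conj_qwalk (hbip : ∀ x y, part x = part y → A x y = 0) (t : ℝ) :
    diagonal (partSign part) * qwalk A t * diagonal (partSign part) = qwalk A (-t) := by
  have hD := diagonal_partSign_mul_self part
  have hconj := Matrix.exp_conj _ ((-(I * (t : ℂ))) • A.map (↑)) (IsUnit.of_mul_eq_one _ hD)
  rw [Matrix.inv_eq_right_inv hD, Matrix.mul_smul, Matrix.smul_mul,
    diagonal_partSign_conj hbip] at hconj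
  rw [qwalk, ← hconj, qwalk]
  simp

theorem star_qwalk_apply_s15 (hA : A.IsSymm) (hbip : ∀ x y, part x = part y → A x y = 0) (t : ℝ)
    (x y : V) : star (qwalk A t x y) = partSign part x * partSign part y * qwalk A t x y := by
  rw [← conjTranspose_apply, qwalk_conjTranspose hA, ← diagonal_partSign_conj_qwalk hbip,
    mul_diagonal, diagonal_mul, ← transpose_apply (qwalk A t), qwalk_transpose hA]
  ring

theorem qwalk_apply_im_eq_zero (hA : A.IsSymm) (hbip : ∀ x y, part x = part y → A x y = 0)
    (t : ℝ) {x y : V} (hxy : part x = part y) : (qwalk A t x y).im = 0 := by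
  rw [← conj_eq_iff_im]
  simpa [partSign_mul_partSign, hxy] using star_qwalk_apply_s15 hA hbip t x y

theorem qwalk_apply_re_eq_zero (hA : A.IsSymm) (hbip : ∀ x y, part x = part y → A x y = 0)
    (t : ℝ) {x y : V} (hxy : part x ≠ part y) : (qwalk A t x y).re = 0 := by
  have h := congrArg re (star_qwalk_apply_s15 hA hbip t x y)
  simp [partSign_mul_partSign, hxy] at h
  linarith

end QuantumWalk

section Revival

variable {V : Type*} [Fintype V] [DecidableEq V] {A : Matrix V V ℝ} {part : V → Bool}
  {a b : V} {α β : ℂ}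

theorem diagonal_mulVec_eC (d : V → ℂ) (x : V) : diagonal d *ᵥ eC x = d x • eC x := by
  rw [eC, diagonal_mulVec_single, ← smul_eq_mul, Pi.single_smul]

theorem apply_eq_of_mulVec_eC {M : Matrix V V ℂ} (hab : a ≠ b)
    (h : M *ᵥ eC a = α • eC a + β • eC b) : M a a = α ∧ M b a = β := by
  have hcol (x : V) : M x a = (α • eC a + β • eC b) x := by
    rw [← h, eC, mulVec_single_one, col_apply]
  constructor <;> simp [hcol, eC, hab, hab.symm]

theorem conjTranspose_qwalk_mulVec_eC (hA : A.IsSymm) (hbip : ∀ x y, part x = part y → A x y = 0)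
    (hpart : part a ≠ part b) {t : ℝ} (h : qwalk A t *ᵥ eC a = α • eC a + β • eC b) :
    (qwalk A t)ᴴ *ᵥ eC a = α • eC a - β • eC b := by
  have haa : partSign part a * partSign part a = 1 := by simp [partSign_mul_partSign]
  have hab : partSign part a * partSign part b = -1 := by simp [partSign_mul_partSign, hpart]
  rw [qwalk_conjTranspose hA, ← diagonal_partSign_conj_qwalk hbip, ← mulVec_mulVec,
    ← mulVec_mulVec, diagonal_mulVec_eC, mulVec_smul, h]
  simp only [mulVec_add, mulVec_smul, diagonal_mulVec_eC, smul_add]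
  linear_combination (norm := module) haa • (α • eC a) + hab • (β • eC b)

theorem im_eq_zero_and_re_eq_zero_of_revival (hA : A.IsSymm)
    (hbip : ∀ x y, part x = part y → A x y = 0) (hab : a ≠ b) (hpart : part a ≠ part b) {t : ℝ}
    (h : qwalk A t *ᵥ eC a = α • eC a + β • eC b) : α.im = 0 ∧ β.re = 0 := by
  obtain ⟨haa, hba⟩ := apply_eq_of_mulVec_eC hab h
  exact ⟨haa ▸ qwalk_apply_im_eq_zero hA hbip t rfl,
    hba ▸ qwalk_apply_re_eq_zero hA hbip t (Ne.symm hpart)⟩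

theorem sq_sub_sq_of_im_eq_zero_of_re_eq_zero (hα : α.im = 0) (hβ : β.re = 0) :
    α ^ 2 - β ^ 2 = ((‖α‖ ^ 2 + ‖β‖ ^ 2 : ℝ) : ℂ) := by
  rw [Complex.sq_norm, Complex.sq_norm]
  apply Complex.ext <;> simp [sq, normSq_apply, hα, hβ]

theorem qwalk_mulVec_eC_of_revival (hA : A.IsSymm)
    (hbip : ∀ x y, part x = part y → A x y = 0) (hab : a ≠ b) (hpart : part a ≠ part b) {t : ℝ}
    (hβ : β ≠ 0) (hnorm : ‖α‖ ^ 2 + ‖β‖ ^ 2 = 1) (h : qwalk A t *ᵥ eC a = α • eC a + β • eC b) :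
    qwalk A t *ᵥ eC b = β • eC a + α • eC b := by
  obtain ⟨hα, hβre⟩ := im_eq_zero_and_re_eq_zero_of_revival hA hbip hab hpart h
  have hαβ : α ^ 2 - β ^ 2 = 1 := by
    rw [sq_sub_sq_of_im_eq_zero_of_re_eq_zero hα hβre, hnorm, ofReal_one]
  exact mulVec_swap_of_mul_eq_one hβ hαβ (qwalk_mul_conjTranspose hA t) h
    (conjTranspose_qwalk_mulVec_eC hA hbip hpart h)

end Revival

section Cospectral

variable {V : Type*} [Fintype V] [DecidableEq V] {A : Matrix V V ℝ}

theorem mul_eq_smul_of_eq_sum_smul {ι : Type*} [Fintype ι] [DecidableEq ι] {θ : ι → ℝ}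
    {E : ι → Matrix V V ℝ} (hdecomp : A = ∑ r, θ r • E r)
    (horth : ∀ r s, E r * E s = if r = s then E r else 0) (r : ι) : E r * A = θ r • E r := by
  simp [hdecomp, Finset.mul_sum, horth]

theorem map_mul_qwalk_of_mul_eq_smul {E : Matrix V V ℝ} {θ : ℝ} (hE : E * A = θ • E) (t : ℝ) :
    E.map (↑) * qwalk A t = Complex.exp (-(I * t) * θ) • E.map (↑) := by
  let : NormedRing (Matrix V V ℂ) := Matrix.linftyOpNormedRing
  let : NormedAlgebra ℂ (Matrix V V ℂ) := Matrix.linftyOpNormedAlgebra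
  apply mul_exp_of_mul_eq_smul
  have hEc : E.map (↑) * A.map (↑) = (θ : ℂ) • E.map ((↑) : ℝ → ℂ) := by
    refine (Matrix.map_mul (f := ofRealHom)).symm.trans ?_
    rw [hE]
    ext
    simp
  rw [mul_smul_comm, hEc, smul_smul]

theorem map_ofReal_mulVec_eC_s15 (E : Matrix V V ℝ) (x : V) :
    E.map (↑) *ᵥ eC x = ofReal ∘ (E *ᵥ eR x) := by
  ext y
  rw [Function.comp_apply, ← ofRealHom_eq_coe, RingHom.map_mulVec]
  congr 2
  ext z
  simp [eC, eR, Pi.single_apply]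

theorem mulVec_eR_eq_or_eq_neg_of_revival {E : Matrix V V ℝ} {θ : ℝ} (hE : E * A = θ • E)
    {a b : V} {t : ℝ} {α β : ℂ} (hβ : β ≠ 0) (ha : qwalk A t *ᵥ eC a = α • eC a + β • eC b)
    (hb : qwalk A t *ᵥ eC b = β • eC a + α • eC b) :
    E *ᵥ eR a = E *ᵥ eR b ∨ E *ᵥ eR a = -(E *ᵥ eR b) := by
  have hproj (w : V → ℂ) : E.map (↑) *ᵥ (qwalk A t *ᵥ w) =
      Complex.exp (-(I * t) * θ) • (E.map (↑) *ᵥ w) := by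
    rw [mulVec_mulVec, map_mul_qwalk_of_mul_eq_smul hE, smul_mulVec]
  have hua := hproj (eC a)
  have hub := hproj (eC b)
  rw [ha, mulVec_add, mulVec_smul, mulVec_smul] at hua
  rw [hb, mulVec_add, mulVec_smul, mulVec_smul] at hub
  rcases eq_or_eq_neg_of_smul_eq hβ hua.symm hub.symm with h | h
  · left
    apply ofReal_injective.comp_left
    dsimp only
    rwa [← map_ofReal_mulVec_eC_s15, ← map_ofReal_mulVec_eC_s15]
  · right
    apply ofReal_injective.comp_left
    dsimp only
    rw [← map_ofReal_mulVec_eC_s15, h, map_ofReal_mulVec_eC_s15]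
    ext; simp

end Cospectral

theorem stmt15_general {n m : ℕ} (G : SimpleGraph (Fin n)) [DecidableRel G.Adj]
    (part : Fin n → Bool) (hbip : ∀ i j, G.Adj i j → part i ≠ part j)
    (θ : Fin m → ℝ) (E : Fin m → Matrix (Fin n) (Fin n) ℝ)
    (hdecomp : G.adjMatrix ℝ = ∑ r, θ r • E r)
    (horth : ∀ r s, E r * E s = if r = s then E r else 0)
    (a b : Fin n) (hab : a ≠ b) (hpart : part a ≠ part b)
    (τ : ℝ) (α β : ℂ) (hβ : β ≠ 0)
    (hnorm : ‖α‖ ^ 2 + ‖β‖ ^ 2 = 1)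
    (hrev : (qwalk (G.adjMatrix ℝ) τ) *ᵥ eC a = α • eC a + β • eC b) :
    α.im = 0 ∧ β.re = 0 ∧
    ∀ r, E r *ᵥ eR a = E r *ᵥ eR b ∨ E r *ᵥ eR a = -(E r *ᵥ eR b) := by
  have hA : (G.adjMatrix ℝ).IsSymm := G.isSymm_adjMatrix
  have hAbip : ∀ x y, part x = part y → G.adjMatrix ℝ x y = 0 := fun x y hxy ↦ by
    simpa [SimpleGraph.adjMatrix_apply] using fun hadj ↦ hbip x y hadj hxy
  obtain ⟨hα, hβre⟩ := im_eq_zero_and_re_eq_zero_of_revival hA hAbip hab hpart hrev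
  have hrev' := qwalk_mulVec_eC_of_revival hA hAbip hab hpart hβ hnorm hrev
  exact ⟨hα, hβre, fun r ↦ mulVec_eR_eq_or_eq_neg_of_revival
    (mul_eq_smul_of_eq_sum_smul hdecomp horth r) hβ hrev hrev'⟩

/-- Fractional revival between two vertices in different parts of the bipartition of a
connected bipartite graph: α is real, β is purely imaginary, and a, b are strongly
cospectral. -/
theorem stmt15 {n m : ℕ} (G : SimpleGraph (Fin n)) [DecidableRel G.Adj]
    (hconn : G.Connected)
    (part : Fin n → Bool) (hbip : ∀ i j, G.Adj i j → part i ≠ part j)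
    (θ : Fin m → ℝ) (E : Fin m → Matrix (Fin n) (Fin n) ℝ)
    (hdecomp : G.adjMatrix ℝ = ∑ r, θ r • E r)
    (hsum : ∑ r, E r = 1)
    (hsymm : ∀ r, (E r).IsSymm)
    (horth : ∀ r s, E r * E s = if r = s then E r else 0)
    (a b : Fin n) (hab : a ≠ b) (hpart : part a ≠ part b)
    (τ : ℝ) (α β : ℂ) (hβ : β ≠ 0)
    (hnorm : ‖α‖ ^ 2 + ‖β‖ ^ 2 = 1)
    (hrev : (qwalk (G.adjMatrix ℝ) τ) *ᵥ eC a = α • eC a + β • eC b) :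
    α.im = 0 ∧ β.re = 0 ∧
    ∀ r, E r *ᵥ eR a = E r *ᵥ eR b ∨ E r *ᵥ eR a = -(E r *ᵥ eR b) :=
  stmt15_general G part hbip θ E hdecomp horth a b hab hpart τ α β hβ hnorm hrev
end

section
/- For every even n ≥ 8, the cycle Cₙ admits no fractional revival between any pair of distinct vertices; combined with the odd case (no fractional revival by the automorphism argument), fractional revival occurs in a cycle Cₙ if and only if n = 4 or n = 6. -/
/-!
The characters `χ_k j = exp (2πi kj/n)` of `ZMod n` diagonalise the cycle, with eigenvalues
`λ_k = 2 cos (2πk/n)`, so `U(τ) e_a = α e_a + β e_b` holds iff `exp (-iτλ_k) = α + β χ_k (b - a)`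
for every `k`. As `λ_{-k} = λ_k`, this forces `χ_1 (b - a) = χ_{-1} (b - a)`: `b - a` has order 2,
so `n` is even and `χ_k (b - a) = (-1)^k`. Comparing `k = 0` with `k = 2`, and `k = 1` with `k = 3`,
puts both `τ (λ_0 - λ_2)` and `τ (λ_1 - λ_3) = λ_1 τ (λ_0 - λ_2)` in `2πℤ`. Hence `λ_1 = 2 cos (2π/n)`
is rational, which Niven's theorem rules out for `n ≥ 7`. For `n = 4` and `n = 6` the times `π/2`
and `2π/3` give revival between antipodal vertices.
-/

open Matrix Complex BigOperators

open Real ZMod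

theorem Matrix.exp_mulVec_of_mulVec_eq_smul {ι : Type*} [Fintype ι] [DecidableEq ι]
    {M : Matrix ι ι ℂ} {v : ι → ℂ} {μ : ℂ} (h : M *ᵥ v = μ • v) :
    NormedSpace.exp M *ᵥ v = Complex.exp μ • v := by
  let _ : NormedRing (Matrix ι ι ℂ) := Matrix.linftyOpNormedRing
  let _ : NormedAlgebra ℂ (Matrix ι ι ℂ) := Matrix.linftyOpNormedAlgebra
  have hpow (k : ℕ) : M ^ k *ᵥ v = μ ^ k • v := by
    induction k with
    | zero => simp
    | succ k ih => rw [pow_succ', ← mulVec_mulVec, ih, mulVec_smul, h, smul_smul, ← pow_succ]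
  have hM := (NormedSpace.exp_series_hasSum_exp' (𝕂 := ℂ) M).map
    (mulVec.addMonoidHomLeft v) (continuous_id.matrix_mulVec continuous_const)
  have hμ := (NormedSpace.exp_series_hasSum_exp' (𝕂 := ℂ) μ).smul_const v
  simp only [Function.comp_def, mulVec.addMonoidHomLeft, AddMonoidHom.coe_mk, ZeroHom.coe_mk,
    smul_mulVec, hpow, smul_smul, smul_eq_mul] at hM hμ
  rw [Complex.exp_eq_exp_ℂ]
  exact hM.unique hμ

theorem qwalk_transpose_s17 {V : Type*} [Fintype V] [DecidableEq V] {A : Matrix V V ℝ}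
    (hA : Aᵀ = A) (t : ℝ) : (qwalk A t)ᵀ = qwalk A t := by
  rw [qwalk, ← Matrix.exp_transpose, transpose_smul, ← transpose_map, hA]

theorem cexp_neg_I_mul (τ x : ℝ) :
    Complex.exp (-(I * τ) * x) = Real.cos (τ * x) - Real.sin (τ * x) * I := by
  rw [show -(I * τ) * x = ((-(τ * x) : ℝ) : ℂ) * I by push_cast; ring, Complex.exp_mul_I,
    ← ofReal_cos, ← ofReal_sin, Real.cos_neg, Real.sin_neg, ofReal_neg]
  ring

theorem exists_int_of_cexp_neg_I_mul_eq {τ x y : ℝ}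
    (h : Complex.exp (-(I * τ) * x) = Complex.exp (-(I * τ) * y)) :
    ∃ m : ℤ, τ * (y - x) = 2 * π * m := by
  obtain ⟨m, hm⟩ := Complex.exp_eq_exp_iff_exists_int.mp h
  have hI : ((τ * (y - x) - 2 * π * m : ℝ) : ℂ) * I = 0 := by
    push_cast
    linear_combination hm
  rw [mul_eq_zero, ofReal_eq_zero, sub_eq_zero] at hI
  exact ⟨m, hI.resolve_right I_ne_zero⟩

theorem ZMod.sub_one_ne_add_one {n : ℕ} (hn : 3 ≤ n) (x : ZMod n) : x - 1 ≠ x + 1 := by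
  intro h
  have h2 : ((2 : ℕ) : ZMod n) = 0 := by
    push_cast
    linear_combination -h
  have := Nat.le_of_dvd two_pos ((ZMod.natCast_eq_zero_iff 2 n).mp h2)
  omega

theorem ZMod.stdAddChar_eq_neg_one {n : ℕ} [NeZero n] {h : ZMod n} (h2 : h + h = 0)
    (h0 : h ≠ 0) : stdAddChar h = -1 := by
  have hsq : stdAddChar h * stdAddChar h = 1 := by
    rw [← AddChar.map_add_eq_mul, h2, AddChar.map_zero_eq_one]
  refine (mul_self_eq_one_iff.mp hsq).resolve_left fun h1 => h0 ?_
  exact injective_stdAddChar (h1.trans (AddChar.map_zero_eq_one _).symm)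

theorem ZMod.even_of_stdAddChar_eq_neg_one {n : ℕ} [NeZero n] {h : ZMod n}
    (hh : stdAddChar h = -1) : Even n := by
  have : (-1 : ℂ) ^ n = 1 := by
    rw [← hh, ← AddChar.map_nsmul_eq_pow, nsmul_eq_mul, ZMod.natCast_self, zero_mul,
      AddChar.map_zero_eq_one]
  exact (neg_one_pow_eq_one_iff_even (by norm_num)).mp this

def cycleAdj (n : ℕ) : Matrix (ZMod n) (ZMod n) ℝ :=
  fun i j => if i = j + 1 ∨ j = i + 1 then 1 else 0

theorem cycleAdj_transpose (n : ℕ) : (cycleAdj n)ᵀ = cycleAdj n := by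
  ext i j
  exact if_congr or_comm rfl rfl

theorem cycleAdj_mulVec {n : ℕ} [NeZero n] (hn : 3 ≤ n) (v : ZMod n → ℂ) :
    (cycleAdj n).map (fun x => (x : ℂ)) *ᵥ v = fun x => v (x - 1) + v (x + 1) := by
  ext x
  have hind (j : ZMod n) : ((if x = j + 1 ∨ j = x + 1 then 1 else 0 : ℝ) : ℂ)
      = (if j = x - 1 then 1 else 0) + (if j = x + 1 then 1 else 0) := by
    rw [eq_comm, ← eq_sub_iff_add_eq]
    have := ZMod.sub_one_ne_add_one hn x
    split_ifs <;> simp_all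
  simp only [mulVec, dotProduct, map_apply, cycleAdj, hind, add_mul, Finset.sum_add_distrib,
    ite_mul, one_mul, zero_mul, Finset.sum_ite_eq', Finset.mem_univ, if_true]

noncomputable def cycleEigenvalue (n : ℕ) (k : ZMod n) : ℝ := 2 * Real.cos (2 * π * k.val / n)

section Eigenvalues

variable {n : ℕ}

theorem cycleEigenvalue_zero : cycleEigenvalue n 0 = 2 := by
  simp [cycleEigenvalue]

theorem cycleEigenvalue_one (hn : 2 ≤ n) : cycleEigenvalue n 1 = 2 * Real.cos (2 * π / n) := by
  have : Fact (1 < n) := ⟨hn⟩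
  simp [cycleEigenvalue, ZMod.val_one]

theorem cycleEigenvalue_one_mem_Ioo (hn : 7 ≤ n) : cycleEigenvalue n 1 ∈ Set.Ioo 1 2 := by
  rw [cycleEigenvalue_one (by omega)]
  have hθ : 0 < 2 * π / n := by positivity
  have hθ' : 2 * π / n < π / 3 := by
    rw [div_lt_div_iff₀ (by positivity) (by norm_num)]
    have : (7 : ℝ) ≤ n := by exact_mod_cast hn
    nlinarith [pi_pos]
  have hlo := Real.cos_lt_cos_of_nonneg_of_le_pi hθ.le (by linarith [pi_pos]) hθ'
  have hhi := Real.cos_lt_cos_of_nonneg_of_le_pi le_rfl (by linarith [pi_pos]) hθ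
  rw [cos_pi_div_three] at hlo
  rw [Real.cos_zero] at hhi
  constructor <;> linarith

theorem irrational_cycleEigenvalue_one (hn : 7 ≤ n) : Irrational (cycleEigenvalue n 1) := by
  rintro ⟨q, hq⟩
  rw [cycleEigenvalue_one (by omega)] at hq
  have hcos := niven (θ := 2 * π / n) ⟨2 / n, by push_cast; ring⟩ ⟨q / 2, by push_cast; linarith⟩
  obtain ⟨hgt, hlt⟩ := cycleEigenvalue_one_mem_Ioo hn
  rw [cycleEigenvalue_one (by omega)] at hgt hlt
  simp only [Set.mem_insert_iff, Set.mem_singleton_iff] at hcos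
  rcases hcos with h | h | h | h | h <;> linarith

variable [NeZero n]

noncomputable def cycleChar (k : ZMod n) : ZMod n → ℂ := fun j => stdAddChar (k * j)

theorem cycleChar_apply_ne_zero (k j : ZMod n) : cycleChar k j ≠ 0 := by
  simp [cycleChar, stdAddChar_apply]

theorem ofReal_cycleEigenvalue (k : ZMod n) :
    (cycleEigenvalue n k : ℂ) = stdAddChar k + stdAddChar (-k) := by
  rw [AddChar.map_neg_eq_conj, Complex.add_conj, stdAddChar_apply, toCircle_apply, cycleEigenvalue,
    show 2 * (π : ℂ) * I * k.val / n = ((2 * π * k.val / n : ℝ) : ℂ) * I by push_cast; ring,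
    Complex.exp_ofReal_mul_I_re]

theorem cycleEigenvalue_neg (k : ZMod n) : cycleEigenvalue n (-k) = cycleEigenvalue n k := by
  apply Complex.ofReal_injective
  rw [ofReal_cycleEigenvalue, ofReal_cycleEigenvalue, neg_neg, add_comm]

theorem cycleEigenvalue_add_add_sub (j k : ZMod n) :
    cycleEigenvalue n (j + k) + cycleEigenvalue n (j - k)
      = cycleEigenvalue n j * cycleEigenvalue n k := by
  apply Complex.ofReal_injective
  push_cast
  simp only [ofReal_cycleEigenvalue, neg_add, neg_neg, sub_eq_add_neg, AddChar.map_add_eq_mul]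
  ring

theorem cycleEigenvalue_two : cycleEigenvalue n 2 = cycleEigenvalue n 1 ^ 2 - 2 := by
  have := cycleEigenvalue_add_add_sub (n := n) 1 1
  rw [sub_self, cycleEigenvalue_zero, one_add_one_eq_two] at this
  linear_combination this

theorem cycleEigenvalue_three :
    cycleEigenvalue n 3 = cycleEigenvalue n 1 ^ 3 - 3 * cycleEigenvalue n 1 := by
  have := cycleEigenvalue_add_add_sub (n := n) 2 1
  rw [show (2 : ZMod n) + 1 = 3 by norm_num, show (2 : ZMod n) - 1 = 1 by norm_num] at this
  linear_combination this + cycleEigenvalue n 1 * cycleEigenvalue_two (n := n)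

theorem cycleAdj_mulVec_cycleChar (hn : 3 ≤ n) (k : ZMod n) :
    (cycleAdj n).map (fun x => (x : ℂ)) *ᵥ cycleChar k
      = (cycleEigenvalue n k : ℂ) • cycleChar k := by
  ext x
  simp only [cycleAdj_mulVec hn, cycleChar, ofReal_cycleEigenvalue, Pi.smul_apply, smul_eq_mul,
    mul_add, mul_one, mul_neg, sub_eq_add_neg, AddChar.map_add_eq_mul]
  ring

theorem qwalk_cycleAdj_mulVec_cycleChar (hn : 3 ≤ n) (τ : ℝ) (k : ZMod n) :
    qwalk (cycleAdj n) τ *ᵥ cycleChar k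
      = Complex.exp (-(I * τ) * cycleEigenvalue n k) • cycleChar k := by
  refine Matrix.exp_mulVec_of_mulVec_eq_smul ?_
  rw [smul_mulVec, cycleAdj_mulVec_cycleChar hn, smul_smul]

theorem eq_of_forall_cycleChar_dotProduct_eq {v w : ZMod n → ℂ}
    (h : ∀ k, cycleChar k ⬝ᵥ v = cycleChar k ⬝ᵥ w) : v = w := by
  refine dft.injective (funext fun k => ?_)
  simpa [dft_apply, cycleChar, dotProduct, mul_comm, smul_eq_mul] using h (-k)

end Eigenvalues

section Revival

variable {n : ℕ} [NeZero n]

theorem qwalk_cycleAdj_mulVec_eC_eq_iff (hn : 3 ≤ n) {τ : ℝ} {α β : ℂ} {a b : ZMod n} :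
    qwalk (cycleAdj n) τ *ᵥ eC a = α • eC a + β • eC b ↔
      ∀ k, Complex.exp (-(I * τ) * cycleEigenvalue n k) = α + β * stdAddChar (k * (b - a)) := by
  have hwalk (k : ZMod n) : cycleChar k ⬝ᵥ (qwalk (cycleAdj n) τ *ᵥ eC a)
      = Complex.exp (-(I * τ) * cycleEigenvalue n k) * cycleChar k a := by
    rw [dotProduct_mulVec, ← mulVec_transpose, qwalk_transpose_s17 (cycleAdj_transpose n),
      qwalk_cycleAdj_mulVec_cycleChar hn, eC, dotProduct_single, mul_one, Pi.smul_apply,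
      smul_eq_mul]
  have hrev (k : ZMod n) : cycleChar k ⬝ᵥ (α • eC a + β • eC b)
      = (α + β * stdAddChar (k * (b - a))) * cycleChar k a := by
    have : cycleChar k b = stdAddChar (k * (b - a)) * cycleChar k a := by
      rw [cycleChar, cycleChar, ← AddChar.map_add_eq_mul]
      ring_nf
    simp only [eC, dotProduct_add, dotProduct_smul, dotProduct_single, mul_one, smul_eq_mul, this]
    ring
  refine ⟨fun H k => ?_, fun H => eq_of_forall_cycleChar_dotProduct_eq fun k => ?_⟩
  · have := hwalk k
    rw [H, hrev] at this
    exact (mul_right_cancel₀ (cycleChar_apply_ne_zero k a) this).symm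
  · rw [hwalk, hrev, H]

theorem eq_four_or_six_of_forall_cexp_eq (hn : 3 ≤ n) {τ : ℝ} {α β : ℂ} {h : ZMod n}
    (hτ : τ ≠ 0) (hβ : β ≠ 0) (h0 : h ≠ 0)
    (H : ∀ k, Complex.exp (-(I * τ) * cycleEigenvalue n k) = α + β * stdAddChar (k * h)) :
    n = 4 ∨ n = 6 := by
  have hh : h + h = 0 := by
    have := H (-1)
    rw [cycleEigenvalue_neg, H, add_right_inj, mul_right_inj' hβ, injective_stdAddChar.eq_iff,
      one_mul, neg_one_mul] at this
    exact eq_neg_iff_add_eq_zero.mp this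
  by_contra hne
  have h7 : 7 ≤ n := by
    obtain ⟨m, rfl⟩ := ZMod.even_of_stdAddChar_eq_neg_one (ZMod.stdAddChar_eq_neg_one hh h0)
    omega
  have h2h : (2 : ZMod n) * h = 0 * h := by rw [two_mul, hh, zero_mul]
  have h3h : (3 : ZMod n) * h = 1 * h := by linear_combination hh
  obtain ⟨p, hp⟩ := exists_int_of_cexp_neg_I_mul_eq (x := cycleEigenvalue n 0)
    (y := cycleEigenvalue n 2) (by rw [H, H, h2h])
  obtain ⟨q, hq⟩ := exists_int_of_cexp_neg_I_mul_eq (x := cycleEigenvalue n 1)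
    (y := cycleEigenvalue n 3) (by rw [H, H, h3h])
  rw [cycleEigenvalue_zero, cycleEigenvalue_two] at hp
  rw [cycleEigenvalue_three] at hq
  obtain ⟨hc_gt, hc_lt⟩ := cycleEigenvalue_one_mem_Ioo h7
  set c := cycleEigenvalue n 1
  have hp0 : (p : ℝ) ≠ 0 := by
    intro hp0
    rw [hp0, mul_zero] at hp
    exact mul_ne_zero hτ (by nlinarith : c ^ 2 - 2 - 2 < 0).ne hp
  have hqp : 2 * π * (q - c * p) = 0 := by linear_combination c * hp - hq
  refine irrational_cycleEigenvalue_one h7 ⟨q / p, ?_⟩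
  push_cast
  rw [div_eq_iff hp0]
  linarith [(mul_eq_zero.mp hqp).resolve_left (by positivity)]

end Revival

theorem qwalk_cycleAdj_four_mulVec_eC :
    qwalk (cycleAdj 4) (π / 2) *ᵥ eC 0 = (0 : ℂ) • eC 0 + (-1 : ℂ) • eC 2 := by
  refine (qwalk_cycleAdj_mulVec_eC_eq_iff (by norm_num)).mpr fun k => ?_
  have h1 : cycleEigenvalue 4 1 = 0 := by
    rw [cycleEigenvalue_one (by norm_num)]
    norm_num [show 2 * π / 4 = π / 2 by ring]
  have hψ : stdAddChar (2 : ZMod 4) = -1 := ZMod.stdAddChar_eq_neg_one (by decide) (by decide)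
  have hk : ∀ k : ZMod 4, k = 0 ∨ k = 1 ∨ k = 2 ∨ k = 3 := by decide
  rcases hk k with rfl | rfl | rfl | rfl <;> rw [cexp_neg_I_mul] <;>
    simp only [sub_zero, zero_mul, one_mul, show (2 : ZMod 4) * 2 = 0 by decide,
      show (3 : ZMod 4) * 2 = 2 by decide, hψ, AddChar.map_zero_eq_one, cycleEigenvalue_zero,
      cycleEigenvalue_two, cycleEigenvalue_three, h1] <;>
    norm_num [show π / 2 * 2 = π by ring]

theorem qwalk_cycleAdj_six_mulVec_eC :
    qwalk (cycleAdj 6) (2 * π / 3) *ᵥ eC 0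
      = (-(1 / 2) : ℂ) • eC 0 + (√3 / 2 * I) • eC 3 := by
  refine (qwalk_cycleAdj_mulVec_eC_eq_iff (by norm_num)).mpr fun k => ?_
  have h1 : cycleEigenvalue 6 1 = 1 := by
    rw [cycleEigenvalue_one (by norm_num)]
    norm_num [show 2 * π / 6 = π / 3 by ring]
  have h4 : cycleEigenvalue 6 4 = cycleEigenvalue 6 2 := by
    rw [← cycleEigenvalue_neg, show (-4 : ZMod 6) = 2 by decide]
  have h5 : cycleEigenvalue 6 5 = cycleEigenvalue 6 1 := by
    rw [← cycleEigenvalue_neg, show (-5 : ZMod 6) = 1 by decide]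
  have hψ : stdAddChar (3 : ZMod 6) = -1 := ZMod.stdAddChar_eq_neg_one (by decide) (by decide)
  have hc : Real.cos (2 * π / 3) = -(1 / 2) := by
    rw [show 2 * π / 3 = π - π / 3 by ring, Real.cos_pi_sub, cos_pi_div_three]
  have hs : Real.sin (2 * π / 3) = √3 / 2 := by
    rw [show 2 * π / 3 = π - π / 3 by ring, Real.sin_pi_sub, sin_pi_div_three]
  have hc' : Real.cos (2 * π / 3 * 2) = -(1 / 2) := by
    rw [show 2 * π / 3 * 2 = π / 3 + π by ring, Real.cos_add_pi, cos_pi_div_three]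
  have hs' : Real.sin (2 * π / 3 * 2) = -(√3 / 2) := by
    rw [show 2 * π / 3 * 2 = π / 3 + π by ring, Real.sin_add_pi, sin_pi_div_three]
  have hk : ∀ k : ZMod 6, k = 0 ∨ k = 1 ∨ k = 2 ∨ k = 3 ∨ k = 4 ∨ k = 5 := by decide
  rcases hk k with rfl | rfl | rfl | rfl | rfl | rfl <;> rw [cexp_neg_I_mul] <;>
    simp only [sub_zero, zero_mul, one_mul, show (2 : ZMod 6) * 3 = 0 by decide,
      show (3 : ZMod 6) * 3 = 3 by decide, show (4 : ZMod 6) * 3 = 0 by decide,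
      show (5 : ZMod 6) * 3 = 3 by decide, h4, h5, hψ, AddChar.map_zero_eq_one,
      cycleEigenvalue_zero, cycleEigenvalue_two, cycleEigenvalue_three, h1] <;>
    norm_num [hc, hs, hc', hs'] <;> ring

/-- Fractional revival occurs in the cycle Cₙ (n ≥ 3) if and only if n = 4 or n = 6. -/
theorem stmt17 (n : ℕ) [NeZero n] (hn : 3 ≤ n) :
    (∃ (a b : ZMod n) (τ : ℝ) (α β : ℂ), a ≠ b ∧ τ ≠ 0 ∧ β ≠ 0 ∧
      ‖α‖ ^ 2 + ‖β‖ ^ 2 = 1 ∧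
      (qwalk (fun i j : ZMod n => if i = j + 1 ∨ j = i + 1 then (1 : ℝ) else 0) τ) *ᵥ
          eC a = α • eC a + β • eC b) ↔
    (n = 4 ∨ n = 6) := by
  constructor
  · rintro ⟨a, b, τ, α, β, hab, hτ, hβ, -, H⟩
    exact eq_four_or_six_of_forall_cexp_eq hn hτ hβ (sub_ne_zero.mpr hab.symm)
      ((qwalk_cycleAdj_mulVec_eC_eq_iff hn).mp H)
  · rintro (rfl | rfl)
    · exact ⟨0, 2, π / 2, 0, -1, by decide, by positivity, by norm_num, by norm_num,
        qwalk_cycleAdj_four_mulVec_eC⟩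
    · refine ⟨0, 3, 2 * π / 3, -(1 / 2), √3 / 2 * I, by decide, by positivity, by simp, ?_,
        qwalk_cycleAdj_six_mulVec_eC⟩
      norm_num [Complex.norm_real, abs_of_nonneg (Real.sqrt_nonneg 3), div_pow]
end
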